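/- arXiv:1908.08218 — 5 statements merged into one kernel-verified Lean document; each statement's English description precedes it below -/
import Mathlib

section
/- The quantum Tsallis q-entropy T_q(ρ) = (1−q)⁻¹ (Tr(ρ^q) − 1) with q > 1 is subadditive: for any bipartite density operator ρ^{AB} with marginals ρ^A, ρ^B, one has T_q(ρ^{AB}) ≤ T_q(ρ^A) + T_q(ρ^B). -/
open ComplexOrder Matrix

noncomputable def ptraceB {A B : Type*} [Fintype B] (ρ : Matrix (A × B) (A × B) ℂ) :
    Matrix A A ℂ := Matrix.of fun a a' => ∑ b, ρ (a, b) (a', b)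

noncomputable def ptraceA {A B : Type*} [Fintype A] (ρ : Matrix (A × B) (A × B) ℂ) :
    Matrix B B ℂ := Matrix.of fun b b' => ∑ a, ρ (a, b) (a, b')

/-- Quantum Tsallis q-entropy `T_q(ρ) = (1-q)⁻¹ (Tr ρ^q − 1)`, computed via the
eigenvalues of a Hermitian matrix (junk value otherwise). -/
noncomputable def Tq {n : Type*} [Fintype n] [DecidableEq n]
    (q : ℝ) (ρ : Matrix n n ℂ) : ℝ :=
  if h : ρ.IsHermitian then (1 - q)⁻¹ * ((∑ j, h.eigenvalues j ^ q) - 1) else 0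

/-!
Diagonalise the marginals, `ρ^A = U diag(μ) U*` and `ρ^B = V diag(ν) V*`, and let `p` be the
diagonal of `ρ` in the product basis `e_{ab} = u_a ⊗ v_b`. Then `p` is a probability distribution
on `A × B` with marginals `μ` and `ν`, so the classical subadditivity of the Tsallis entropy gives
`∑ μ^q + ∑ ν^q ≤ 1 + ∑ p^q`. Writing `ρ = ∑ₖ λₖ |ψₖ⟩⟨ψₖ|`, Schur's argument gives
`p = w λ` with `w_{mk} = |⟨e_m, ψₖ⟩|²` doubly stochastic, so convexity of `x ↦ x^q` gives
`∑ p^q ≤ ∑ λ^q`. As `1 - q < 0`, the two inequalities together are the claim.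
-/

open Finset Kronecker

theorem sum_rpow_div_sum_le_one {κ : Type*} [Fintype κ] {q : ℝ} (hq : 1 ≤ q) {x : κ → ℝ}
    (hx : ∀ j, 0 ≤ x j) : ∑ j, (x j / ∑ k, x k) ^ q ≤ 1 := by
  have hr : 0 ≤ ∑ k, x k := sum_nonneg fun k _ => hx k
  calc ∑ j, (x j / ∑ k, x k) ^ q ≤ ∑ j, x j / ∑ k, x k := by
        refine sum_le_sum fun j _ => Real.rpow_le_self_of_le_one (div_nonneg (hx j) hr) ?_ hq
        exact div_le_one_of_le₀ (single_le_sum (fun k _ => hx k) (mem_univ j)) hr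
    _ ≤ 1 := by rw [← sum_div]; exact div_self_le_one _

theorem sum_rpow_marginals_le {ι κ : Type*} [Fintype ι] [Fintype κ] {q : ℝ} (hq : 1 ≤ q)
    {p : ι → κ → ℝ} (hp : ∀ i j, 0 ≤ p i j) (hp1 : ∑ i, ∑ j, p i j = 1) :
    ∑ i, (∑ j, p i j) ^ q + ∑ j, (∑ i, p i j) ^ q ≤ 1 + ∑ i, ∑ j, p i j ^ q := by
  set r : ι → ℝ := fun i => ∑ j, p i j
  set s : ι → ℝ := fun i => ∑ j, (p i j / r i) ^ q
  have hr : ∀ i, 0 ≤ r i := fun i => sum_nonneg fun j _ => hp i j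
  have hpr : ∀ i j, r i * (p i j / r i) = p i j := fun i j =>
    mul_div_cancel_of_imp' fun h => (sum_eq_zero_iff_of_nonneg fun j _ => hp i j).1 h j (mem_univ j)
  -- chain rule of the Tsallis entropy; `s i` is the power sum of the `i`-th conditional law
  have hrow : ∀ i, ∑ j, p i j ^ q = r i ^ q * s i := fun i => by
    rw [mul_sum]
    refine sum_congr rfl fun j _ => ?_
    rw [← Real.mul_rpow (hr i) (div_nonneg (hp i j) (hr i)), hpr]
  have hrow_le : ∀ i, r i ^ q - ∑ j, p i j ^ q ≤ r i - r i * s i := fun i => by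
    have hs : s i ≤ 1 := sum_rpow_div_sum_le_one hq (hp i)
    have hrq : r i ^ q ≤ r i := Real.rpow_le_self_of_le_one (hr i)
      (hp1 ▸ single_le_sum (fun i _ => hr i) (mem_univ i)) hq
    rw [hrow]
    nlinarith [mul_le_mul_of_nonneg_right hrq (sub_nonneg.2 hs)]
  -- concavity of the Tsallis entropy (Jensen)
  have hcol : ∑ j, (∑ i, p i j) ^ q ≤ ∑ i, r i * s i := by
    calc ∑ j, (∑ i, p i j) ^ q = ∑ j, (∑ i, r i * (p i j / r i)) ^ q := by simp only [hpr]
      _ ≤ ∑ j, ∑ i, r i * (p i j / r i) ^ q := sum_le_sum fun j _ =>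
          Real.rpow_arith_mean_le_arith_mean_rpow univ r (fun i => p i j / r i)
            (fun i _ => hr i) hp1 (fun i _ => div_nonneg (hp i j) (hr i)) hq
      _ = ∑ i, r i * s i := by rw [sum_comm]; simp only [s, mul_sum]
  have hrows : ∑ i, r i ^ q - ∑ i, ∑ j, p i j ^ q ≤ 1 - ∑ i, r i * s i := by
    simpa only [sum_sub_distrib, hp1] using sum_le_sum fun i (_ : i ∈ univ) => hrow_le i
  linarith

theorem ConvexOn.sum_map_mulVec_le {n : Type*} [Fintype n] [DecidableEq n] {s : Set ℝ}
    {f : ℝ → ℝ} (hf : ConvexOn ℝ s f) {M : Matrix n n ℝ} (hM : M ∈ doublyStochastic ℝ n)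
    {x : n → ℝ} (hx : ∀ i, x i ∈ s) : ∑ i, f ((M *ᵥ x) i) ≤ ∑ i, f (x i) := by
  obtain ⟨hnonneg, hrow, hcol⟩ := mem_doublyStochastic_iff_sum.1 hM
  calc ∑ i, f ((M *ᵥ x) i) ≤ ∑ i, ∑ j, M i j * f (x j) := sum_le_sum fun i _ =>
        hf.map_sum_le (fun j _ => hnonneg i j) (hrow i) (fun j _ => hx j)
    _ = ∑ j, f (x j) := by rw [sum_comm]; simp only [← sum_mul, hcol, one_mul]

theorem Matrix.norm_sq_mem_doublyStochastic_of_mem_unitaryGroup {n 𝕜 : Type*} [Fintype n]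
    [DecidableEq n] [RCLike 𝕜] {Q : Matrix n n 𝕜} (hQ : Q ∈ unitaryGroup n 𝕜) :
    (of fun i j => ‖Q i j‖ ^ 2) ∈ doublyStochastic ℝ n := by
  refine mem_doublyStochastic_iff_sum.2 ⟨fun i j => sq_nonneg _, fun i => ?_, fun j => ?_⟩
  · have h := congr_fun₂ (mem_unitaryGroup_iff.1 hQ) i i
    simp only [mul_apply, star_apply, RCLike.star_def, RCLike.mul_conj, one_apply_eq] at h
    exact_mod_cast h
  · have h := congr_fun₂ (mem_unitaryGroup_iff'.1 hQ) j j
    simp only [mul_apply, star_apply, RCLike.star_def, RCLike.conj_mul, one_apply_eq] at h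
    exact_mod_cast h

theorem Matrix.IsHermitian.exists_doublyStochastic_diag_star_mul_mul_eq_mulVec {n 𝕜 : Type*}
    [Fintype n] [DecidableEq n] [RCLike 𝕜] {A : Matrix n n 𝕜} (hA : A.IsHermitian)
    {K : Matrix n n 𝕜} (hK : K ∈ unitaryGroup n 𝕜) :
    ∃ w ∈ doublyStochastic ℝ n, ∀ i, (star K * A * K) i i = ((w *ᵥ hA.eigenvalues) i : 𝕜) := by
  set W : Matrix n n 𝕜 := (hA.eigenvectorUnitary : Matrix n n 𝕜)
  set Q := star K * W
  have hQ : Q ∈ unitaryGroup n 𝕜 := mul_mem (Unitary.star_mem hK) hA.eigenvectorUnitary.2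
  refine ⟨_, norm_sq_mem_doublyStochastic_of_mem_unitaryGroup hQ, fun i => ?_⟩
  have hconj : star K * A * K = Q * diagonal (RCLike.ofReal ∘ hA.eigenvalues) * star Q := by
    conv_lhs => rw [hA.spectral_theorem, Unitary.conjStarAlgAut_apply]
    simp only [Q, W, star_mul, star_star, Matrix.mul_assoc]
  rw [hconj, mul_apply]
  simp only [mul_diagonal, star_apply, RCLike.star_def, mulVec, dotProduct, of_apply,
    Function.comp_apply, RCLike.ofReal_sum, RCLike.ofReal_mul, RCLike.ofReal_pow]
  refine sum_congr rfl fun k _ => ?_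
  rw [mul_right_comm, RCLike.mul_conj]

theorem Matrix.IsHermitian.sum_map_re_diag_star_mul_mul_le {n 𝕜 : Type*} [Fintype n]
    [DecidableEq n] [RCLike 𝕜] {A : Matrix n n 𝕜} (hA : A.IsHermitian) {K : Matrix n n 𝕜}
    (hK : K ∈ unitaryGroup n 𝕜) {s : Set ℝ} {f : ℝ → ℝ} (hf : ConvexOn ℝ s f)
    (hs : ∀ k, hA.eigenvalues k ∈ s) :
    ∑ i, f (RCLike.re ((star K * A * K) i i)) ≤ ∑ k, f (hA.eigenvalues k) := by
  obtain ⟨w, hw, hdiag⟩ := hA.exists_doublyStochastic_diag_star_mul_mul_eq_mulVec hK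
  simp only [hdiag, RCLike.ofReal_re]
  exact hf.sum_map_mulVec_le hw hs

theorem Matrix.IsHermitian.star_eigenvectorUnitary_mul_mul_self {n 𝕜 : Type*} [Fintype n]
    [DecidableEq n] [RCLike 𝕜] {A : Matrix n n 𝕜} (hA : A.IsHermitian) :
    star (hA.eigenvectorUnitary : Matrix n n 𝕜) * A * (hA.eigenvectorUnitary : Matrix n n 𝕜) =
      diagonal (RCLike.ofReal ∘ hA.eigenvalues) :=
  (Unitary.conjStarAlgAut_star_apply _ _).symm.trans hA.conjStarAlgAut_star_eigenvectorUnitary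

theorem trace_ptraceB {A B : Type*} [Fintype A] [Fintype B] (ρ : Matrix (A × B) (A × B) ℂ) :
    (ptraceB ρ).trace = ρ.trace := by
  simp [trace, ptraceB, Fintype.sum_prod_type]

theorem isHermitian_ptraceB {A B : Type*} [Fintype B] {ρ : Matrix (A × B) (A × B) ℂ}
    (hρ : ρ.IsHermitian) : (ptraceB ρ).IsHermitian :=
  IsHermitian.ext fun a a' => by
    simp only [ptraceB, of_apply, star_sum]
    exact sum_congr rfl fun b _ => hρ.apply (a, b) (a', b)

theorem ptraceA_eq_ptraceB_submatrix_swap {A B : Type*} [Fintype A]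
    (ρ : Matrix (A × B) (A × B) ℂ) :
    ptraceA ρ = ptraceB (ρ.submatrix Prod.swap Prod.swap) := rfl

theorem isHermitian_ptraceA {A B : Type*} [Fintype A] {ρ : Matrix (A × B) (A × B) ℂ}
    (hρ : ρ.IsHermitian) : (ptraceA ρ).IsHermitian :=
  isHermitian_ptraceB (hρ.submatrix Prod.swap)

theorem ptraceB_star_kronecker_mul_mul {A B : Type*} [Fintype A] [Fintype B] [DecidableEq B]
    (ρ : Matrix (A × B) (A × B) ℂ) (U : Matrix A A ℂ) {V : Matrix B B ℂ}
    (hV : V ∈ unitaryGroup B ℂ) :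
    ptraceB (star (U ⊗ₖ V) * ρ * (U ⊗ₖ V)) = star U * ptraceB ρ * U := by
  have hV' : ∀ b₁ b₂, ∑ b, V b₂ b * star (V b₁ b) = if b₂ = b₁ then 1 else 0 := fun b₁ b₂ => by
    simpa [mul_apply, one_apply] using congr_fun₂ (mem_unitaryGroup_iff.1 hV) b₂ b₁
  ext a a'
  calc _ = ∑ p : A × B, ∑ m : A × B,
        star (U m.1 a) * ρ m p * U p.1 a' * ∑ b, V p.2 b * star (V m.2 b) := by
        simp only [ptraceB, of_apply, mul_apply, star_apply, kroneckerMap_apply, star_mul',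
          sum_mul, mul_sum]
        rw [sum_comm]
        refine sum_congr rfl fun p _ => ?_
        rw [sum_comm]
        exact sum_congr rfl fun m _ => sum_congr rfl fun b _ => by ring
    _ = _ := by
        simp only [hV', mul_ite, mul_one, mul_zero, Fintype.sum_prod_type, sum_ite_eq, mem_univ,
          if_true, ptraceB, mul_apply, of_apply, star_apply, sum_mul, mul_sum]
        exact sum_congr rfl fun _ _ => sum_comm

theorem Matrix.kronecker_submatrix_swap {R l m n o : Type*} [CommMagma R] (U : Matrix l m R)
    (V : Matrix n o R) : (U ⊗ₖ V).submatrix Prod.swap Prod.swap = V ⊗ₖ U := by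
  ext; simp [mul_comm]

theorem ptraceA_star_kronecker_mul_mul {A B : Type*} [Fintype A] [Fintype B] [DecidableEq A]
    (ρ : Matrix (A × B) (A × B) ℂ) {U : Matrix A A ℂ} (hU : U ∈ unitaryGroup A ℂ)
    (V : Matrix B B ℂ) :
    ptraceA (star (U ⊗ₖ V) * ρ * (U ⊗ₖ V)) = star V * ptraceA ρ * V := by
  have hswap : (star (U ⊗ₖ V) * ρ * (U ⊗ₖ V)).submatrix Prod.swap Prod.swap =
      star (V ⊗ₖ U) * ρ.submatrix Prod.swap Prod.swap * (V ⊗ₖ U) := by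
    rw [← kronecker_submatrix_swap U V, star_eq_conjTranspose, star_eq_conjTranspose,
      conjTranspose_submatrix, ← Equiv.coe_prodComm, submatrix_mul_equiv, submatrix_mul_equiv]
  rw [ptraceA_eq_ptraceB_submatrix_swap, hswap, ptraceB_star_kronecker_mul_mul _ _ hU]
  rfl

theorem sum_rpow_eigenvalues_ptrace_le {A B : Type*} [Fintype A] [Fintype B] [DecidableEq A]
    [DecidableEq B] {q : ℝ} (hq : 1 ≤ q) {ρ : Matrix (A × B) (A × B) ℂ} (hρ : ρ.PosSemidef)
    (htr : ρ.trace = 1) :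
    ∑ a, (isHermitian_ptraceB hρ.1).eigenvalues a ^ q +
        ∑ b, (isHermitian_ptraceA hρ.1).eigenvalues b ^ q ≤
      1 + ∑ m, hρ.1.eigenvalues m ^ q := by
  set hρA := isHermitian_ptraceB hρ.1
  set hρB := isHermitian_ptraceA hρ.1
  set U : Matrix A A ℂ := (hρA.eigenvectorUnitary : Matrix A A ℂ)
  set V : Matrix B B ℂ := (hρB.eigenvectorUnitary : Matrix B B ℂ)
  have hK : U ⊗ₖ V ∈ unitaryGroup (A × B) ℂ :=
    kronecker_mem_unitary hρA.eigenvectorUnitary.2 hρB.eigenvectorUnitary.2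
  set σ := star (U ⊗ₖ V) * ρ * (U ⊗ₖ V)
  set p : A → B → ℝ := fun a b => (σ (a, b) (a, b)).re
  have hp : ∀ a b, 0 ≤ p a b := fun a b =>
    (Complex.nonneg_iff.1 (hρ.conjTranspose_mul_mul_same (U ⊗ₖ V)).diag_nonneg).1
  have hpA : ∀ a, ∑ b, p a b = hρA.eigenvalues a := fun a => by
    calc ∑ b, p a b = (ptraceB σ a a).re := by simp [p, ptraceB, Complex.re_sum]
      _ = hρA.eigenvalues a := by
        rw [ptraceB_star_kronecker_mul_mul _ _ hρB.eigenvectorUnitary.2,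
          hρA.star_eigenvectorUnitary_mul_mul_self]
        simp
  have hpB : ∀ b, ∑ a, p a b = hρB.eigenvalues b := fun b => by
    calc ∑ a, p a b = (ptraceA σ b b).re := by simp [p, ptraceA, Complex.re_sum]
      _ = hρB.eigenvalues b := by
        rw [ptraceA_star_kronecker_mul_mul _ hρA.eigenvectorUnitary.2,
          hρB.star_eigenvectorUnitary_mul_mul_self]
        simp
  have hp1 : ∑ a, ∑ b, p a b = 1 := by
    have := congr_arg Complex.re (hρA.trace_eq_sum_eigenvalues.symm.trans (trace_ptraceB ρ))
    simpa [hpA, htr, Complex.re_sum] using this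
  have hschur : ∑ a, ∑ b, p a b ^ q ≤ ∑ m, hρ.1.eigenvalues m ^ q := by
    rw [← Fintype.sum_prod_type']
    exact hρ.1.sum_map_re_diag_star_mul_mul_le hK (convexOn_rpow hq) hρ.eigenvalues_nonneg
  have hmarg := sum_rpow_marginals_le hq hp hp1
  simp only [hpA, hpB] at hmarg
  linarith

/-- Subadditivity of the Tsallis q-entropy for `q > 1`. -/
theorem stmt4 {A B : Type*} [Fintype A] [Fintype B] [DecidableEq A] [DecidableEq B]
    (q : ℝ) (hq : 1 < q)
    (ρ : Matrix (A × B) (A × B) ℂ) (hρ : ρ.PosSemidef) (htr : ρ.trace = 1) :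
    Tq q ρ ≤ Tq q (ptraceB ρ) + Tq q (ptraceA ρ) := by
  have hsum := sum_rpow_eigenvalues_ptrace_le hq.le hρ htr
  have hneg : (1 - q)⁻¹ < 0 := inv_lt_zero.2 (by linarith)
  simp only [Tq, dif_pos hρ.1, dif_pos (isHermitian_ptraceB hρ.1),
    dif_pos (isHermitian_ptraceA hρ.1)]
  nlinarith
end

section
/- For q > 1 and density operators ρ, σ on finite-dimensional Hilbert spaces, the Tsallis q-entropy satisfies T_q(ρ ⊗ σ) = T_q(ρ) + T_q(σ) if and only if at least one of ρ, σ is a pure state. -/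
open ComplexOrder Matrix Kronecker

/-!
The eigenvalues of `ρ ⊗ σ` are the products `λᵢ μⱼ` of those of `ρ` and `σ` (conjugate by the
Kronecker product of the eigenvector unitaries), so with `P = ∑ λᵢ ^ q` and `Q = ∑ μⱼ ^ q`,
`T_q(ρ ⊗ σ) - T_q(ρ) - T_q(σ) = (1 - q)⁻¹ (P - 1) (Q - 1)`. For a spectrum summing to `1` and
`q > 1`, each `λ ^ q ≤ λ` with equality only at `0` and `1`, so `P = 1` exactly when a single
eigenvalue is nonzero, i.e. when the state has rank one.
-/

open Polynomial

theorem sum_rpow_eq_one_iff_card_ne_zero_eq_one {ι : Type*} [Fintype ι] {p : ι → ℝ}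
    (hp : ∀ i, 0 ≤ p i) (hsum : ∑ i, p i = 1) {q : ℝ} (hq : 1 < q) :
    ∑ i, p i ^ q = 1 ↔ Fintype.card {i // p i ≠ 0} = 1 := by
  have hle_one (i : ι) : p i ≤ 1 :=
    hsum ▸ Finset.single_le_sum (fun j _ => hp j) (Finset.mem_univ i)
  constructor
  · intro h
    have hfix : ∀ i, p i ^ q = p i := by
      simpa using (Finset.sum_eq_sum_iff_of_le fun i _ =>
        Real.rpow_le_self_of_le_one (hp i) (hle_one i) hq.le).1 (h.trans hsum.symm)
    have hboole (i : ι) : p i = if p i ≠ 0 then 1 else 0 := by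
      split_ifs with h0
      · by_contra h1
        exact (Real.rpow_lt_self_of_lt_one ((hp i).lt_of_ne' h0) ((hle_one i).lt_of_ne h1)
          hq).ne (hfix i)
      · exact not_not.1 h0
    rw [Finset.sum_congr rfl fun i _ => hboole i, Finset.sum_boole] at hsum
    rw [Fintype.card_subtype]
    exact_mod_cast hsum
  · intro h
    obtain ⟨⟨a, _⟩, huniq⟩ := Fintype.card_eq_one_iff.1 h
    have hzero (i : ι) (hi : i ≠ a) : p i = 0 := by
      by_contra h; exact hi (congrArg Subtype.val (huniq ⟨i, h⟩))
    have hpa : p a = 1 := by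
      rwa [Finset.sum_eq_single a (fun i _ => hzero i) (by simp)] at hsum
    rw [Finset.sum_eq_single a (fun i _ hi => by rw [hzero i hi, Real.zero_rpow (by positivity)])
      (by simp), hpa, Real.one_rpow]

namespace Matrix

variable {𝕜 : Type*} [RCLike 𝕜] {n m : Type*} {A : Matrix n n 𝕜} {B : Matrix m m 𝕜}

theorem IsHermitian.kronecker (hA : A.IsHermitian) (hB : B.IsHermitian) : (A ⊗ₖ B).IsHermitian := by
  rw [IsHermitian, conjTranspose_kronecker, hA.eq, hB.eq]

variable [Fintype n] [Fintype m] [DecidableEq n] [DecidableEq m]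

theorem IsHermitian.charpoly_kronecker (hA : A.IsHermitian) (hB : B.IsHermitian) :
    (A ⊗ₖ B).charpoly =
      ∏ k : n × m, (X - C ((hA.eigenvalues k.1 * hB.eigenvalues k.2 : ℝ) : 𝕜)) := by
  conv_lhs => rw [hA.spectral_theorem, hB.spectral_theorem]
  simp only [Unitary.conjStarAlgAut_apply]
  rw [mul_kronecker_mul, mul_kronecker_mul, charpoly_mul_comm, ← mul_assoc, ← mul_kronecker_mul,
    UnitaryGroup.star_mul_self, UnitaryGroup.star_mul_self, one_kronecker_one, one_mul,
    diagonal_kronecker_diagonal, charpoly_diagonal]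
  simp

theorem IsHermitian.sum_eigenvalues_kronecker (hA : A.IsHermitian) (hB : B.IsHermitian)
    (f : ℝ → ℝ) :
    ∑ k, f ((hA.kronecker hB).eigenvalues k) =
      ∑ k : n × m, f (hA.eigenvalues k.1 * hB.eigenvalues k.2) := by
  -- both sides are the sum of `f ∘ re` over the roots of `(A ⊗ₖ B).charpoly`
  set g : n × m → ℝ := fun k => hA.eigenvalues k.1 * hB.eigenvalues k.2
  have hroots : (∏ k, (X - C (g k : 𝕜))).roots = Finset.univ.val.map (fun k => (g k : 𝕜)) := by
    simpa [Multiset.map_map, Function.comp_def] using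
      roots_multiset_prod_X_sub_C (Finset.univ.val.map (fun k => (g k : 𝕜)))
  have h := congrArg (fun p : 𝕜[X] => (p.roots.map (f ∘ RCLike.re)).sum)
    (hA.charpoly_kronecker hB)
  rw [(hA.kronecker hB).roots_charpoly_eq_eigenvalues, hroots, Multiset.map_map,
    Multiset.map_map] at h
  simp only [Function.comp_def, RCLike.ofReal_re] at h
  exact h

theorem PosSemidef.sum_eigenvalues_rpow_kronecker (hA : A.PosSemidef) (hB : B.PosSemidef) (q : ℝ) :
    ∑ k, (hA.1.kronecker hB.1).eigenvalues k ^ q =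
      (∑ i, hA.1.eigenvalues i ^ q) * ∑ j, hB.1.eigenvalues j ^ q := by
  rw [hA.1.sum_eigenvalues_kronecker hB.1 (· ^ q), Fintype.sum_prod_type, Finset.sum_mul_sum]
  simp only [Real.mul_rpow (hA.eigenvalues_nonneg _) (hB.eigenvalues_nonneg _)]

theorem IsHermitian.sum_eigenvalues_eq_one (hA : A.IsHermitian) (htr : A.trace = 1) :
    ∑ i, hA.eigenvalues i = 1 := by
  rw [hA.trace_eq_sum_eigenvalues] at htr
  exact_mod_cast htr

theorem PosSemidef.sum_eigenvalues_rpow_eq_one_iff (hA : A.PosSemidef)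
    (htr : A.trace = 1) {q : ℝ} (hq : 1 < q) :
    ∑ i, hA.1.eigenvalues i ^ q = 1 ↔ A.rank = 1 := by
  rw [hA.1.rank_eq_card_non_zero_eigs]
  exact sum_rpow_eq_one_iff_card_ne_zero_eq_one hA.eigenvalues_nonneg
    (hA.1.sum_eigenvalues_eq_one htr) hq

end Matrix

/-- For `q > 1`, `T_q(ρ ⊗ σ) = T_q(ρ) + T_q(σ)` iff at least one of `ρ`, `σ`
is a pure state (rank one). -/
theorem stmt5 {A B : Type*} [Fintype A] [Fintype B] [DecidableEq A] [DecidableEq B]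
    (q : ℝ) (hq : 1 < q)
    (ρ : Matrix A A ℂ) (σ : Matrix B B ℂ)
    (hρ : ρ.PosSemidef) (hσ : σ.PosSemidef)
    (tρ : ρ.trace = 1) (tσ : σ.trace = 1) :
    Tq q (ρ ⊗ₖ σ) = Tq q ρ + Tq q σ ↔ (ρ.rank = 1 ∨ σ.rank = 1) := by
  rw [Tq, Tq, Tq, dif_pos hρ.1, dif_pos hσ.1, dif_pos (hρ.1.kronecker hσ.1),
    hρ.sum_eigenvalues_rpow_kronecker hσ, ← hρ.sum_eigenvalues_rpow_eq_one_iff tρ hq,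
    ← hσ.sum_eigenvalues_rpow_eq_one_iff tσ hq]
  set P := ∑ i, hρ.1.eigenvalues i ^ q
  set Q := ∑ j, hσ.1.eigenvalues j ^ q
  have hq' : (1 - q)⁻¹ ≠ 0 := inv_ne_zero (by linarith)
  calc (1 - q)⁻¹ * (P * Q - 1) = (1 - q)⁻¹ * (P - 1) + (1 - q)⁻¹ * (Q - 1)
      ↔ (1 - q)⁻¹ * ((P - 1) * (Q - 1)) = 0 := by constructor <;> intro h <;> linear_combination h
    _ ↔ P = 1 ∨ Q = 1 := by simp [hq', sub_eq_zero]
end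

section
/- For any bipartite pure state |ψ⟩ ∈ H^A ⊗ H^{BC} (where H^{BC} = H^B ⊗ H^C), one has 1 + Tr((ρ^{BC})²) ≥ Tr((ρ^B)²) + Tr((ρ^C)²), and consequently the tripartite tangle τ^{(3)}(|ψ⟩) = 3 − Tr((ρ^A)²) − Tr((ρ^B)²) − Tr((ρ^C)²) satisfies τ^{(3)}(|ψ⟩) ≥ τ^{(2)}(|ψ⟩^{A|BC}) = 2 − Tr((ρ^A)²) − Tr((ρ^{BC})²). -/
open ComplexOrder Matrix

noncomputable def outerProd {n : Type*} (ψ : n → ℂ) : Matrix n n ℂ :=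
  Matrix.vecMulVec ψ (star ψ)

noncomputable def purity {n : Type*} [Fintype n] (σ : Matrix n n ℂ) : ℝ :=
  ((σ * σ).trace).re

/-!
Take two copies of the state, `Φ (x, x') = ψ x * ψ x'`, and let `σ`, `τ` exchange the `B`-labels,
resp. the `C`-labels, of the two copies. Every purity is an overlap `∑ Φ * conj (Φ ∘ π)`:
`π = id` gives `1`, `σ` gives `Tr ρ_B²`, `τ` gives `Tr ρ_C²` and `σ τ` gives `Tr ρ_BC²`.
The function `T = Φ - Φ ∘ σ - Φ ∘ τ + Φ ∘ σ ∘ τ` changes sign under `σ` and under `τ`, hence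
`0 ≤ ∑ |T|² = 4 ∑ Φ * conj T = 4 (1 - Tr ρ_B² - Tr ρ_C² + Tr ρ_BC²)`.
The tangle inequality is a rearrangement of this one.
-/

open Function

theorem Function.Involutive.sum_comp {X M : Type*} [Fintype X] [AddCommMonoid M] {σ : X → X}
    (hσ : Involutive σ) (f : X → M) : ∑ x, f (σ x) = ∑ x, f x :=
  Equiv.sum_comp (hσ.toPerm σ) f

theorem re_sum_mul_star_sub_sub_add_nonneg {X : Type*} [Fintype X] {σ τ : X → X} (Φ : X → ℂ)
    (hσ : Involutive σ) (hτ : Involutive τ) (hστ : ∀ x, σ (τ x) = τ (σ x)) :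
    0 ≤ (∑ x, Φ x * star (Φ x) - ∑ x, Φ x * star (Φ (σ x)) - ∑ x, Φ x * star (Φ (τ x))
      + ∑ x, Φ x * star (Φ (σ (τ x)))).re := by
  set T : X → ℂ := fun x => Φ x - Φ (σ x) - Φ (τ x) + Φ (σ (τ x)) with hT
  have hTσ : ∀ x, T (σ x) = -T x := fun x => by
    simp only [hT, hσ x, hστ]; ring
  have hTτ : ∀ x, T (τ x) = -T x := fun x => by
    simp only [hT, hτ x]; ring
  have hστ_inv : Involutive (σ ∘ τ) := fun x => by
    simp only [Function.comp_apply, hστ (σ _), hσ _, hτ x]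
  have hσ_sum : ∑ x, Φ (σ x) * star (T x) = -∑ x, Φ x * star (T x) := by
    rw [← hσ.sum_comp (fun x => Φ x * star (T x))]
    simp [hTσ]
  have hτ_sum : ∑ x, Φ (τ x) * star (T x) = -∑ x, Φ x * star (T x) := by
    rw [← hτ.sum_comp (fun x => Φ x * star (T x))]
    simp [hTτ]
  have hστ_sum : ∑ x, Φ (σ (τ x)) * star (T x) = ∑ x, Φ x * star (T x) := by
    rw [← hστ_inv.sum_comp (fun x => Φ x * star (T x))]
    simp [hTσ, hTτ]
  have hsq : ∑ x, T x * star (T x) = 4 * ∑ x, Φ x * star (T x) := by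
    simp only [hT, sub_mul, add_mul, Finset.sum_add_distrib, Finset.sum_sub_distrib]
    rw [hσ_sum, hτ_sum, hστ_sum]
    ring
  have hexpand : ∑ x, Φ x * star (T x) = ∑ x, Φ x * star (Φ x) - ∑ x, Φ x * star (Φ (σ x))
      - ∑ x, Φ x * star (Φ (τ x)) + ∑ x, Φ x * star (Φ (σ (τ x))) := by
    simp only [hT, star_add, star_sub, mul_add, mul_sub, Finset.sum_add_distrib,
      Finset.sum_sub_distrib]
  have hnonneg : 0 ≤ (∑ x, T x * star (T x)).re := by
    simp only [Complex.star_def, Complex.mul_conj, Complex.re_sum, Complex.ofReal_re]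
    exact Finset.sum_nonneg fun x _ => Complex.normSq_nonneg _
  rw [hsq, Complex.mul_re, Complex.re_ofNat, Complex.im_ofNat, zero_mul, sub_zero] at hnonneg
  rw [← hexpand]
  linarith

def tensorSq {n : Type*} (ψ : n → ℂ) (x : n × n) : ℂ := ψ x.1 * ψ x.2

theorem sum_tensorSq_mul_star {n : Type*} [Fintype n] (ψ : n → ℂ) :
    ∑ x, tensorSq ψ x * star (tensorSq ψ x) = ((∑ x, ‖ψ x‖ ^ 2 : ℝ) ^ 2 : ℝ) := by
  simp only [Complex.star_def, Complex.mul_conj', tensorSq, norm_mul, Fintype.sum_prod_type]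
  push_cast [mul_pow]
  rw [sq, Finset.sum_mul_sum]

def swapSnd {P Q : Type*} (x : (P × Q) × (P × Q)) : (P × Q) × (P × Q) :=
  ((x.1.1, x.2.2), (x.2.1, x.1.2))

theorem trace_ptraceA_outerProd_mul_self {P Q : Type*} [Fintype P] [Fintype Q] (ψ : P × Q → ℂ) :
    (ptraceA (outerProd ψ) * ptraceA (outerProd ψ)).trace
      = ∑ x, tensorSq ψ x * star (tensorSq ψ (swapSnd x)) := by
  simp only [Matrix.trace, Matrix.diag, Matrix.mul_apply, ptraceA, outerProd, tensorSq, swapSnd,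
    Matrix.vecMulVec_apply, Matrix.of_apply, Pi.star_apply, Fintype.sum_prod_type,
    Finset.sum_mul, Finset.mul_sum, star_mul']
  simp_rw [Finset.sum_comm (γ := Q) (α := P)]
  rw [Finset.sum_comm]
  congr! 4
  ring

theorem outerProd_comp {m n : Type*} (ψ : n → ℂ) (e : m → n) :
    outerProd (ψ ∘ e) = (outerProd ψ).submatrix e e := rfl

section Tripartite

variable {A B C : Type*}

theorem ptraceA_ptraceA [Fintype A] [Fintype B] (ρ : Matrix (A × (B × C)) (A × (B × C)) ℂ) :
    ptraceA (ptraceA ρ)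
      = ptraceA (ρ.submatrix (Equiv.prodAssoc A B C) (Equiv.prodAssoc A B C)) := by
  ext c c'
  simp only [ptraceA, of_apply, submatrix_apply, Fintype.sum_prod_type]
  exact Finset.sum_comm

def prodSwapAssoc (A B C : Type*) : (A × C) × B ≃ A × (B × C) :=
  (Equiv.prodAssoc A C B).trans ((Equiv.refl A).prodCongr (Equiv.prodComm C B))

theorem ptraceB_ptraceA [Fintype A] [Fintype C] (ρ : Matrix (A × (B × C)) (A × (B × C)) ℂ) :
    ptraceB (ptraceA ρ)
      = ptraceA (ρ.submatrix (prodSwapAssoc A B C) (prodSwapAssoc A B C)) := by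
  ext b b'
  simp only [ptraceA, ptraceB, of_apply, submatrix_apply, Fintype.sum_prod_type]
  exact Finset.sum_comm

def swapB (x : (A × (B × C)) × (A × (B × C))) : (A × (B × C)) × (A × (B × C)) :=
  ((x.1.1, (x.2.2.1, x.1.2.2)), (x.2.1, (x.1.2.1, x.2.2.2)))

def swapC (x : (A × (B × C)) × (A × (B × C))) : (A × (B × C)) × (A × (B × C)) :=
  ((x.1.1, (x.1.2.1, x.2.2.2)), (x.2.1, (x.2.2.1, x.1.2.2)))

theorem swapB_involutive : Involutive (swapB (A := A) (B := B) (C := C)) := fun _ => rfl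

theorem swapC_involutive : Involutive (swapC (A := A) (B := B) (C := C)) := fun _ => rfl

theorem swapB_swapC (x : (A × (B × C)) × (A × (B × C))) : swapB (swapC x) = swapSnd x := rfl

theorem swapB_comm_swapC (x : (A × (B × C)) × (A × (B × C))) :
    swapB (swapC x) = swapC (swapB x) := rfl

variable [Fintype A] [Fintype B] [Fintype C]

theorem trace_ptraceB_ptraceA_outerProd_mul_self (ψ : A × (B × C) → ℂ) :
    (ptraceB (ptraceA (outerProd ψ)) * ptraceB (ptraceA (outerProd ψ))).trace
      = ∑ x, tensorSq ψ x * star (tensorSq ψ (swapB x)) := by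
  rw [ptraceB_ptraceA, ← outerProd_comp, trace_ptraceA_outerProd_mul_self]
  exact Fintype.sum_equiv ((prodSwapAssoc A B C).prodCongr (prodSwapAssoc A B C)) _ _
    fun _ => rfl

theorem trace_ptraceA_ptraceA_outerProd_mul_self (ψ : A × (B × C) → ℂ) :
    (ptraceA (ptraceA (outerProd ψ)) * ptraceA (ptraceA (outerProd ψ))).trace
      = ∑ x, tensorSq ψ x * star (tensorSq ψ (swapC x)) := by
  rw [ptraceA_ptraceA, ← outerProd_comp, trace_ptraceA_outerProd_mul_self]
  exact Fintype.sum_equiv ((Equiv.prodAssoc A B C).prodCongr (Equiv.prodAssoc A B C)) _ _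
    fun _ => rfl

end Tripartite

/-- For a tripartite pure state, `1 + Tr((ρ^{BC})²) ≥ Tr((ρ^B)²) + Tr((ρ^C)²)`,
and hence the tripartite tangle dominates the bipartite tangle across `A|BC`:
`3 − Tr((ρ^A)²) − Tr((ρ^B)²) − Tr((ρ^C)²) ≥ 2 − Tr((ρ^A)²) − Tr((ρ^{BC})²)`. -/
theorem stmt7 {A B C : Type*} [Fintype A] [Fintype B] [Fintype C]
    (ψ : A × (B × C) → ℂ) (hψ : ∑ x, ‖ψ x‖ ^ 2 = 1) :
    1 + purity (ptraceA (outerProd ψ)) ≥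
      purity (ptraceB (ptraceA (outerProd ψ))) + purity (ptraceA (ptraceA (outerProd ψ))) ∧
    3 - purity (ptraceB (outerProd ψ)) - purity (ptraceB (ptraceA (outerProd ψ)))
        - purity (ptraceA (ptraceA (outerProd ψ))) ≥
      2 - purity (ptraceB (outerProd ψ)) - purity (ptraceA (outerProd ψ)) := by
  have key := re_sum_mul_star_sub_sub_add_nonneg (tensorSq ψ) swapB_involutive swapC_involutive
    swapB_comm_swapC
  simp only [swapB_swapC] at key
  rw [sum_tensorSq_mul_star, hψ, ← trace_ptraceB_ptraceA_outerProd_mul_self,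
    ← trace_ptraceA_ptraceA_outerProd_mul_self, ← trace_ptraceA_outerProd_mul_self] at key
  simp only [Complex.add_re, Complex.sub_re, one_pow, Complex.ofReal_one, Complex.one_re] at key
  unfold purity
  constructor <;> linarith
end

section
/- There exists a two-qubit density operator σ^{BC} such that Tr²(√(σ^B)) + Tr²(√(σ^C)) > 1 + Tr²(√(σ^{BC})), where Tr²(√σ) denotes the square of Tr(√σ). Specifically, one may take σ^{BC} with eigenvalues {87/128, 37/128, 1/32, 0} and marginals σ^B, σ^C with eigenvalues {7/8, 1/8} and {3/4, 1/4} respectively, whose existence is guaranteed by the two-qubit marginal eigenvalue conditions. -/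
/-!
The state is an X-state: in the basis `|00⟩, |11⟩, |01⟩, |10⟩` it is the direct sum of two
real symmetric `2 × 2` blocks. Its diagonal `167, 7, 57, 25` (over `256`) makes both marginals
diagonal with the prescribed entries, and the off-diagonal entries `√1169 / 256`, `√833 / 256`
give the blocks the trace and determinant of `{87/128, 0}` and `{37/128, 1/32}`. The inequality
is then numerical: `(1 + √7 / 4) + (1 + √3 / 2) ≈ 3.53` against `1 + Tr²√σ ≈ 3.37`.
-/

open ComplexOrder Matrix

noncomputable def eigMultiset {n : Type*} [Fintype n] [DecidableEq n]
    (ρ : Matrix n n ℂ) : Multiset ℝ :=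
  if h : ρ.IsHermitian then Finset.univ.val.map h.eigenvalues else 0

/-- `Tr √σ`, computed via eigenvalues of a Hermitian matrix. -/
noncomputable def trSqrt {n : Type*} [Fintype n] [DecidableEq n]
    (ρ : Matrix n n ℂ) : ℝ :=
  if h : ρ.IsHermitian then ∑ j, Real.sqrt (h.eigenvalues j) else 0

open Polynomial

section Spectrum

variable {n : Type*} [Fintype n] [DecidableEq n]

lemma eigMultiset_eq_of_roots_charpoly {A : Matrix n n ℂ} (hA : A.IsHermitian) {s : Multiset ℝ}
    (h : A.charpoly.roots = s.map (↑)) : eigMultiset A = s := by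
  rw [hA.roots_charpoly_eq_eigenvalues, ← Multiset.map_map] at h
  rw [eigMultiset, dif_pos hA]
  exact Multiset.map_injective Complex.ofReal_injective h

lemma eigMultiset_diagonal (d : n → ℝ) :
    eigMultiset (diagonal fun i => (d i : ℂ)) = Finset.univ.val.map d := by
  refine eigMultiset_eq_of_roots_charpoly ?_ ?_
  · simp [IsHermitian, diagonal_conjTranspose, Pi.star_def]
  · rw [charpoly_diagonal, roots_prod _ _ (Finset.prod_ne_zero_iff.2 fun i _ => X_sub_C_ne_zero _)]
    simp [Multiset.map_map]

lemma trSqrt_eq_sum_sqrt_eigMultiset (A : Matrix n n ℂ) :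
    trSqrt A = ((eigMultiset A).map Real.sqrt).sum := by
  unfold trSqrt eigMultiset
  split_ifs <;> simp [Multiset.map_map]

lemma posSemidef_of_eigMultiset_nonneg {A : Matrix n n ℂ} (hA : A.IsHermitian)
    (h : ∀ x ∈ eigMultiset A, 0 ≤ x) : A.PosSemidef :=
  hA.posSemidef_iff_eigenvalues_nonneg.2 fun i =>
    h _ (by rw [eigMultiset, dif_pos hA]; exact Multiset.mem_map_of_mem _ (Finset.mem_univ_val i))

end Spectrum

lemma charpoly_fin_two_eq {R : Type*} [CommRing R] [Nontrivial R] (M : Matrix (Fin 2) (Fin 2) R)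
    {a b : R} (htr : M.trace = a + b) (hdet : M.det = a * b) :
    M.charpoly = (X - C a) * (X - C b) := by
  rw [charpoly_fin_two, htr, hdet]; simp only [C_add, C_mul]; ring

def parityEquiv : Fin 2 × Fin 2 ≃ Fin 2 ⊕ Fin 2 where
  toFun p := if p.1 = p.2 then .inl p.1 else .inr p.1
  invFun := Sum.elim (fun a => (a, a)) (fun a => (a, 1 - a))
  left_inv := by decide
  right_inv := by decide

noncomputable section

def evenBlock : Matrix (Fin 2) (Fin 2) ℂ :=
  !![167/256, (√1169 / 256 : ℝ); (√1169 / 256 : ℝ), 7/256]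

def oddBlock : Matrix (Fin 2) (Fin 2) ℂ :=
  !![57/256, (√833 / 256 : ℝ); (√833 / 256 : ℝ), 25/256]

def xState : Matrix (Fin 2 × Fin 2) (Fin 2 × Fin 2) ℂ :=
  reindex parityEquiv.symm parityEquiv.symm (fromBlocks evenBlock 0 0 oddBlock)

lemma evenBlock_isHermitian : evenBlock.IsHermitian := by
  ext i j; fin_cases i <;> fin_cases j <;> simp [evenBlock]

lemma oddBlock_isHermitian : oddBlock.IsHermitian := by
  ext i j; fin_cases i <;> fin_cases j <;> simp [oddBlock]

lemma evenBlock_charpoly :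
    evenBlock.charpoly = (X - C ((87/128 : ℝ) : ℂ)) * (X - C ((0 : ℝ) : ℂ)) := by
  apply charpoly_fin_two_eq
  · simp [evenBlock, trace_fin_two]; norm_num
  · have h : ((√1169 : ℝ) : ℂ) * (√1169 : ℝ) = 1169 := by
      exact_mod_cast Real.mul_self_sqrt (by norm_num : (0 : ℝ) ≤ 1169)
    simp [evenBlock, det_fin_two]
    linear_combination -h / 65536

lemma oddBlock_charpoly :
    oddBlock.charpoly = (X - C ((37/128 : ℝ) : ℂ)) * (X - C ((1/32 : ℝ) : ℂ)) := by
  apply charpoly_fin_two_eq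
  · simp [oddBlock, trace_fin_two]; norm_num
  · have h : ((√833 : ℝ) : ℂ) * (√833 : ℝ) = 833 := by
      exact_mod_cast Real.mul_self_sqrt (by norm_num : (0 : ℝ) ≤ 833)
    simp [oddBlock, det_fin_two]
    linear_combination -h / 65536

lemma xState_isHermitian : xState.IsHermitian :=
  (IsHermitian.fromBlocks evenBlock_isHermitian (by simp) oddBlock_isHermitian).submatrix _

lemma eigMultiset_xState : eigMultiset xState = {87/128, 37/128, 1/32, 0} := by
  refine eigMultiset_eq_of_roots_charpoly xState_isHermitian ?_
  rw [xState, charpoly_reindex, charpoly_fromBlocks_zero₁₂, evenBlock_charpoly,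
    oddBlock_charpoly]
  simp [roots_mul, X_sub_C_ne_zero]
  rw [Multiset.cons_swap]
  exact congrArg _ (congrArg _ (Multiset.pair_comm _ _))

lemma ptraceB_xState : ptraceB xState = diagonal fun i => ((![7/8, 1/8] i : ℝ) : ℂ) := by
  ext a a'
  fin_cases a <;> fin_cases a' <;>
    simp [ptraceB, xState, parityEquiv, evenBlock, oddBlock] <;> norm_num

lemma ptraceA_xState : ptraceA xState = diagonal fun i => ((![3/4, 1/4] i : ℝ) : ℂ) := by
  ext a a'
  fin_cases a <;> fin_cases a' <;>
    simp [ptraceA, xState, parityEquiv, evenBlock, oddBlock] <;> norm_num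

lemma trace_xState : xState.trace = 1 := by
  simp [trace, Fintype.sum_prod_type, xState, parityEquiv, evenBlock, oddBlock]; norm_num

lemma eigMultiset_ptraceB_xState : eigMultiset (ptraceB xState) = {7/8, 1/8} := by
  rw [ptraceB_xState, eigMultiset_diagonal]; simp [Fin.univ_val_map]; rfl

lemma eigMultiset_ptraceA_xState : eigMultiset (ptraceA xState) = {3/4, 1/4} := by
  rw [ptraceA_xState, eigMultiset_diagonal]; simp [Fin.univ_val_map]; rfl

lemma posSemidef_xState : xState.PosSemidef := by
  refine posSemidef_of_eigMultiset_nonneg xState_isHermitian fun x hx => ?_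
  rw [eigMultiset_xState] at hx
  simp only [Multiset.insert_eq_cons, Multiset.mem_cons, Multiset.mem_singleton] at hx
  rcases hx with rfl | rfl | rfl | rfl <;> norm_num

end

lemma sqrt_spectra_gap :
    (√(7/8) + √(1/8)) ^ 2 + (√(3/4) + √(1/4)) ^ 2 >
      1 + (√(87/128) + (√(37/128) + (√(1/32) + √0))) ^ 2 := by
  have lower (a x : ℝ) (ha : 0 ≤ a := by norm_num) (h : a ^ 2 < x := by norm_num) : a < √x :=
    (Real.lt_sqrt ha).2 h
  have upper (a x : ℝ) (ha : 0 < a := by norm_num) (h : x < a ^ 2 := by norm_num) : √x < a :=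
    (Real.sqrt_lt' ha).2 h
  have hB : (1.288 : ℝ) < √(7/8) + √(1/8) := by
    linarith [lower 0.935 (7/8), lower 0.353 (1/8)]
  have hA : (1.365 : ℝ) < √(3/4) + √(1/4) := by
    linarith [lower 0.866 (3/4), lower 0.499 (1/4)]
  have hBC : √(87/128) + (√(37/128) + (√(1/32) + √0)) < 1.54 := by
    linarith [upper 0.825 (87/128), upper 0.538 (37/128), upper 0.177 (1/32), Real.sqrt_zero]
  calc 1 + (√(87/128) + (√(37/128) + (√(1/32) + √0))) ^ 2 < 1 + 1.54 ^ 2 := by gcongr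
    _ < 1.288 ^ 2 + 1.365 ^ 2 := by norm_num
    _ < _ := by gcongr

/-- There is a two-qubit state `σ^{BC}` with spectrum `{87/128, 37/128, 1/32, 0}` and
marginal spectra `{7/8, 1/8}`, `{3/4, 1/4}` such that
`Tr²√σ^B + Tr²√σ^C > 1 + Tr²√σ^{BC}`. -/
theorem stmt8 :
    ∃ σ : Matrix (Fin 2 × Fin 2) (Fin 2 × Fin 2) ℂ,
      σ.PosSemidef ∧ σ.trace = 1 ∧
      eigMultiset σ = {87/128, 37/128, 1/32, 0} ∧
      eigMultiset (ptraceB σ) = {7/8, 1/8} ∧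
      eigMultiset (ptraceA σ) = {3/4, 1/4} ∧
      trSqrt (ptraceB σ) ^ 2 + trSqrt (ptraceA σ) ^ 2 > 1 + trSqrt σ ^ 2 := by
  refine ⟨xState, posSemidef_xState, trace_xState, eigMultiset_xState,
    eigMultiset_ptraceB_xState, eigMultiset_ptraceA_xState, ?_⟩
  simp only [trSqrt_eq_sum_sqrt_eigMultiset, eigMultiset_xState, eigMultiset_ptraceB_xState,
    eigMultiset_ptraceA_xState, Multiset.insert_eq_cons, Multiset.map_cons, Multiset.map_singleton,
    Multiset.sum_cons, Multiset.sum_singleton]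
  exact sqrt_spectra_gap
end

section
/- Let ρ^{AB} be a mixed maximally entangled state of the form ρ^{AB} = |ψ₊⟩⟨ψ₊|^{AB₁} ⊗ ω^{B₂}, where |ψ₊⟩ = (1/√m) Σ_{i=0}^{m−1} |i⟩^A|i⟩^{B₁} and ω^{B₂} = Σ_k p_k |k⟩⟨k|^{B₂} (H^B ⊇ H^{B₁} ⊗ H^{B₂}). Then for any tripartite pure state |φ⟩^{ABC} with Tr_C |φ⟩⟨φ| = ρ^{AB}, the reduced state on AC is a product state: ρ^{AC} = ρ^A ⊗ ρ^C, with ρ^A = I^A/m. -/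
open ComplexOrder Matrix Kronecker

section reductions

variable {A B C : Type*} [Fintype A] [Fintype B] [Fintype C]

/-- Trace out the last factor of a tripartite state on `A × (B × C)`. -/
noncomputable def ptrC (ρ : Matrix (A × (B × C)) (A × (B × C)) ℂ) :
    Matrix (A × B) (A × B) ℂ :=
  Matrix.of fun x y => ∑ c, ρ (x.1, (x.2, c)) (y.1, (y.2, c))

/-- Trace out the middle factor. -/
noncomputable def ptrB (ρ : Matrix (A × (B × C)) (A × (B × C)) ℂ) :
    Matrix (A × C) (A × C) ℂ :=
  Matrix.of fun x y => ∑ b, ρ (x.1, (b, x.2)) (y.1, (b, y.2))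

/-- Reduced state on `A`. -/
noncomputable def ptrToA (ρ : Matrix (A × (B × C)) (A × (B × C)) ℂ) :
    Matrix A A ℂ :=
  Matrix.of fun a a' => ∑ bc, ρ (a, bc) (a', bc)

/-- Reduced state on `C`. -/
noncomputable def ptrToC (ρ : Matrix (A × (B × C)) (A × (B × C)) ℂ) :
    Matrix C C ℂ :=
  Matrix.of fun c c' => ∑ a, ∑ b, ρ (a, (b, c)) (a, (b, c'))

end reductions

/-- If `ρ^{AB} = |ψ₊⟩⟨ψ₊|^{AB₁} ⊗ ω^{B₂}` is a mixed "maximally entangled" state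
(with `|ψ₊⟩` the maximally entangled pure state on `A ⊗ B₁` and `ω` diagonal),
then every tripartite pure state `φ^{ABC}` with `Tr_C |φ⟩⟨φ| = ρ^{AB}` has a product
reduced state on `AC`: `ρ^{AC} = ρ^A ⊗ ρ^C`, with `ρ^A = I/m`. -/
theorem stmt18 {m : ℕ} (hm : 0 < m) {B₂ C : Type*} [Fintype B₂] [DecidableEq B₂] [Fintype C]
    (p : B₂ → ℝ) (hp : ∀ k, 0 ≤ p k) (hpsum : ∑ k, p k = 1)
    (φ : Fin m × ((Fin m × B₂) × C) → ℂ) (hφ : ∑ x, ‖φ x‖ ^ 2 = 1)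
    (hred : ptrC (outerProd φ) = Matrix.of fun (x y : Fin m × (Fin m × B₂)) =>
      ((if x.1 = x.2.1 then ((1 / Real.sqrt m : ℝ) : ℂ) else 0) *
        (starRingEnd ℂ) (if y.1 = y.2.1 then ((1 / Real.sqrt m : ℝ) : ℂ) else 0)) *
        Matrix.diagonal (fun k => (p k : ℂ)) x.2.2 y.2.2) :
    ptrB (outerProd φ) = ptrToA (outerProd φ) ⊗ₖ ptrToC (outerProd φ) ∧
    ptrToA (outerProd φ) = ((1 / m : ℝ) : ℂ) • (1 : Matrix (Fin m) (Fin m) ℂ) := by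
  have hm0 : (m : ℝ) ≠ 0 := Nat.cast_ne_zero.mpr hm.ne'
  have hμ : ((1 / Real.sqrt m : ℝ) : ℂ) * (starRingEnd ℂ) ((1 / Real.sqrt m : ℝ) : ℂ)
      = ((1 / m : ℝ) : ℂ) := by
    rw [Complex.conj_ofReal, ← Complex.ofReal_mul]
    congr 1
    rw [div_mul_div_comm, one_mul, Real.mul_self_sqrt (Nat.cast_nonneg m)]
  have hE : ∀ (a b₁ : Fin m) (b₂ : B₂) (a' b₁' : Fin m) (b₂' : B₂),
      ∑ c, φ (a, ((b₁, b₂), c)) * (starRingEnd ℂ) (φ (a', ((b₁', b₂'), c))) =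
      (if a = b₁ then ((1 / Real.sqrt m : ℝ) : ℂ) else 0) *
        (starRingEnd ℂ) (if a' = b₁' then ((1 / Real.sqrt m : ℝ) : ℂ) else 0) *
        (if b₂ = b₂' then (p b₂ : ℂ) else 0) := by
    intro a b₁ b₂ a' b₁' b₂'
    have := congrFun (congrFun hred (a, (b₁, b₂))) (a', (b₁', b₂'))
    simp only [ptrC, outerProd, Matrix.of_apply, Matrix.vecMulVec_apply, Pi.star_apply,
      Matrix.diagonal_apply, ← starRingEnd_apply] at this
    exact this
  have hzero : ∀ (f : C → ℂ), (∑ c, f c * (starRingEnd ℂ) (f c)) = 0 → ∀ c, f c = 0 := by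
    intro f hsum c
    have h1 : ∑ c, (Complex.normSq (f c) : ℂ) = 0 := by
      simpa [Complex.mul_conj] using hsum
    have h2 : ∑ c, Complex.normSq (f c) = 0 := by exact_mod_cast h1
    have := (Finset.sum_eq_zero_iff_of_nonneg
      (fun c _ => Complex.normSq_nonneg (f c))).mp h2 c (Finset.mem_univ c)
    exact Complex.normSq_eq_zero.mp this
  have h0 : ∀ (a b₁ : Fin m) (b₂ : B₂) (c : C), a ≠ b₁ → φ (a, ((b₁, b₂), c)) = 0 := by
    intro a b₁ b₂ c hne
    refine hzero (fun c => φ (a, ((b₁, b₂), c))) ?_ c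
    rw [hE a b₁ b₂ a b₁ b₂]
    simp [hne]
  have h1 : ∀ (a a' : Fin m) (b₂ : B₂) (c : C),
      φ (a, ((a, b₂), c)) = φ (a', ((a', b₂), c)) := by
    intro a a' b₂ c
    have key := hzero (fun c => φ (a, ((a, b₂), c)) - φ (a', ((a', b₂), c))) ?_ c
    · exact sub_eq_zero.mp key
    have e1 := hE a a b₂ a a b₂
    have e2 := hE a a b₂ a' a' b₂
    have e3 := hE a' a' b₂ a a b₂
    have e4 := hE a' a' b₂ a' a' b₂
    simp only [if_pos rfl] at e1 e2 e3 e4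
    calc ∑ c, (φ (a, ((a, b₂), c)) - φ (a', ((a', b₂), c))) *
          (starRingEnd ℂ) (φ (a, ((a, b₂), c)) - φ (a', ((a', b₂), c)))
        = (∑ c, φ (a, ((a, b₂), c)) * (starRingEnd ℂ) (φ (a, ((a, b₂), c))))
          - (∑ c, φ (a, ((a, b₂), c)) * (starRingEnd ℂ) (φ (a', ((a', b₂), c))))
          - ((∑ c, φ (a', ((a', b₂), c)) * (starRingEnd ℂ) (φ (a, ((a, b₂), c))))
          - ∑ c, φ (a', ((a', b₂), c)) * (starRingEnd ℂ) (φ (a', ((a', b₂), c)))) := by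
          simp only [map_sub, sub_mul, mul_sub, Finset.sum_sub_distrib]
          ring
      _ = 0 := by rw [e1, e2, e3, e4]; ring
  obtain ⟨w, hweq, hwsum⟩ : ∃ w : B₂ → C → ℂ,
      (∀ (a b₁ : Fin m) (b₂ : B₂) (c : C),
        φ (a, ((b₁, b₂), c)) = if b₁ = a then w b₂ c else 0) ∧
      (∀ b₂ b₂', ∑ c, w b₂ c * (starRingEnd ℂ) (w b₂' c) =
        (if b₂ = b₂' then (p b₂ : ℂ) else 0) * ((1 / m : ℝ) : ℂ)) := by
    refine ⟨fun b₂ c => φ (⟨0, hm⟩, ((⟨0, hm⟩, b₂), c)), ?_, ?_⟩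
    · intro a b₁ b₂ c
      by_cases h : b₁ = a
      · rw [if_pos h]; subst h; exact h1 b₁ ⟨0, hm⟩ b₂ c
      · rw [if_neg h]; exact h0 a b₁ b₂ c fun e => h e.symm
    · intro b₂ b₂'
      rw [hE ⟨0, hm⟩ ⟨0, hm⟩ b₂ ⟨0, hm⟩ ⟨0, hm⟩ b₂']
      simp only [if_pos rfl, if_true]
      rw [hμ]
      ring
  have hA : ptrToA (outerProd φ) = ((1 / m : ℝ) : ℂ) • (1 : Matrix (Fin m) (Fin m) ℂ) := by
    ext a a'
    simp only [ptrToA, outerProd, Matrix.of_apply, Matrix.vecMulVec_apply, Pi.star_apply,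
      Complex.star_def, Matrix.smul_apply, Matrix.one_apply, smul_eq_mul,
      Fintype.sum_prod_type, hweq]
    simp only [apply_ite (starRingEnd ℂ), map_zero, ite_mul, mul_ite, zero_mul, mul_zero,
      Finset.sum_ite_irrel, Finset.sum_const_zero, Finset.sum_ite_eq, Finset.mem_univ, if_true]
    rw [Finset.sum_ite_eq' Finset.univ a']
    simp only [Finset.mem_univ, if_true, hwsum, if_pos rfl, ← Finset.sum_mul]
    have hps : (∑ b₂, ((p b₂ : ℝ) : ℂ)) = 1 := by
      rw [← Complex.ofReal_sum, hpsum, Complex.ofReal_one]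
    by_cases h : a = a'
    · subst h
      simp [hps]
    · rw [if_neg (fun e : a' = a => h e.symm), if_neg h]
  refine ⟨?_, hA⟩
  rw [hA]
  ext ⟨a, c⟩ ⟨a', c'⟩
  simp only [ptrB, ptrToC, outerProd, Matrix.of_apply, Matrix.vecMulVec_apply, Pi.star_apply,
    Complex.star_def, Fintype.sum_prod_type, hweq, Matrix.kroneckerMap_apply,
    Matrix.smul_apply, Matrix.one_apply, smul_eq_mul]
  simp only [apply_ite (starRingEnd ℂ), map_zero, ite_mul, mul_ite, zero_mul, mul_zero,
    Finset.sum_ite_irrel, Finset.sum_const_zero, Finset.sum_ite_eq, Finset.mem_univ, if_true]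
  simp only [Finset.sum_ite_eq', Finset.mem_univ, if_true, if_pos rfl, Finset.sum_const,
    Finset.card_univ, Fintype.card_fin, nsmul_eq_mul, mul_one]
  have hinv : ((1 / m : ℝ) : ℂ) * (m : ℂ) = 1 := by
    push_cast
    field_simp
  by_cases h : a' = a
  · rw [if_pos h, if_pos h.symm, ← mul_assoc, hinv, one_mul]
  · rw [if_neg h, if_neg (fun e : a = a' => h e.symm)]
end
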